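/- arXiv:1310.4093 — 2 statements merged into one kernel-verified Lean document; each statement's English description precedes it below -/
import Mathlib

section
/- Fix a set partition π of a set of positive integers. Let T be a π-increasing tree (an increasing tree whose vertex set is a union of blocks of π such that every block contained in the vertex set forms a chain of ancestors in T) with maximum vertex v. If T is irreducible (i.e., the v-dependence graph G_v(T) is connected), then G_v(T) is a directed tree rooted at the block containing v, with all edges directed towards the root. -/
open scoped Classical

/-- An unordered increasing tree on a finite set of positive integers,
given by its vertex set and parent function: the root is the minimum vertex
and is fixed by `parent`, and every nonroot vertex has a parent in the tree
with strictly smaller label (so labels increase away from the root). -/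
structure ITree : Type where
  verts : Finset ℕ
  parent : ℕ → ℕ
  pos : ∀ v ∈ verts, 0 < v
  parent_root : ∀ v ∈ verts, (∀ u ∈ verts, v ≤ u) → parent v = v
  parent_lt : ∀ v ∈ verts, ¬(∀ u ∈ verts, v ≤ u) → parent v ∈ verts ∧ parent v < v

/-- `a` is an ancestor of `v` in `T` (this includes `a = v`): some iterate of
the parent function sends `v` to `a`. -/
def Ancestor (T : ITree) (a v : ℕ) : Prop := ∃ k : ℕ, T.parent^[k] v = a

/-- The chain from the root of `T` to `v`: the set of ancestors of `v`. -/
noncomputable def chain (T : ITree) (v : ℕ) : Finset ℕ :=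
  T.verts.filter (fun a => Ancestor T a v)

/-- The number of sons of the vertex `i` in `T`. -/
noncomputable def sons (T : ITree) (i : ℕ) : ℕ :=
  (T.verts.filter (fun v => v ≠ i ∧ T.parent v = i)).card

/-- `R = splice(T₁, v₁; T₂, v₂)`: the increasing tree on the union of the
vertex sets obtained by merging the chain from the root of `T₁` to `v₁` with
the chain from the root of `T₂` to `v₂` into a single increasing chain
(each chain vertex having as parent its predecessor in the merged chain),
all other vertices keeping their parent.  This is exactly the interleaving of
the `v₁`-decomposition of `T₁` and the `v₂`-decomposition of `T₂` so that the
roots along the resulting chain increase. -/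
def IsSplice (T₁ : ITree) (v₁ : ℕ) (T₂ : ITree) (v₂ : ℕ) (R : ITree) : Prop :=
  R.verts = T₁.verts ∪ T₂.verts ∧
  (∀ w ∈ T₁.verts, w ∉ chain T₁ v₁ ∪ chain T₂ v₂ → R.parent w = T₁.parent w) ∧
  (∀ w ∈ T₂.verts, w ∉ chain T₁ v₁ ∪ chain T₂ v₂ → R.parent w = T₂.parent w) ∧
  (∀ w ∈ chain T₁ v₁ ∪ chain T₂ v₂,
    ∀ h : ((chain T₁ v₁ ∪ chain T₂ v₂).filter (· < w)).Nonempty,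
      R.parent w = ((chain T₁ v₁ ∪ chain T₂ v₂).filter (· < w)).max' h)

/-- `π` is a set partition of a set of positive integers: its blocks are
nonempty, consist of positive integers, and are pairwise disjoint. -/
def IsPartition (π : Finset (Finset ℕ)) : Prop :=
  (∀ B ∈ π, B.Nonempty) ∧ (∀ B ∈ π, ∀ b ∈ B, 0 < b) ∧
    (∀ B ∈ π, ∀ B' ∈ π, B ≠ B' → Disjoint B B')

/-- `T` is a `π`-increasing tree: its vertex set is a union of blocks of `π`,
and every block contained in the vertex set forms a chain of ancestors in `T`
(for `i < j` in the same block, `i` is an ancestor of `j`). -/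
def PiIncreasing (π : Finset (Finset ℕ)) (T : ITree) : Prop :=
  (∀ v ∈ T.verts, ∃ B ∈ π, v ∈ B ∧ B ⊆ T.verts) ∧
  (∀ B ∈ π, B ⊆ T.verts → ∀ i ∈ B, ∀ j ∈ B, i ≤ j → Ancestor T i j)

/-- The edge relation of the `v`-dependence graph `G_v(T)` (on the blocks of
`π` contained in `V(T)`): there is an edge from `B` to `B'` when the maximum
`μ` of `B` does not lie on the chain from the root of `T` to `v`, and the
piece of the `v`-decomposition of `T` containing `μ` (as a nonroot vertex) is
rooted at a vertex `a ∈ B'`; the root `a` of that piece is the largest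
ancestor of `v` which is also an ancestor of `μ`. -/
def DepEdge (π : Finset (Finset ℕ)) (T : ITree) (v : ℕ) (B B' : Finset ℕ) : Prop :=
  B ∈ π ∧ B' ∈ π ∧ B ⊆ T.verts ∧ B' ⊆ T.verts ∧
  ∃ hB : B.Nonempty, ¬ Ancestor T (B.max' hB) v ∧
    ∃ a ∈ B', Ancestor T a v ∧ Ancestor T a (B.max' hB) ∧
      ∀ w, Ancestor T w v → Ancestor T w (B.max' hB) → w ≤ a

/-- The `v`-dependence graph `G_v(T)` is connected: any two blocks of `π`
contained in `V(T)` are related by the equivalence closure of the edge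
relation. -/
def DepConnected (π : Finset (Finset ℕ)) (T : ITree) (v : ℕ) : Prop :=
  ∀ B ∈ π, B ⊆ T.verts → ∀ B' ∈ π, B' ⊆ T.verts →
    Relation.EqvGen (DepEdge π T v) B B'

/-!
In `G_M(T)` every block has at most one outgoing edge (its target is the block of a uniquely
determined vertex), and `π^M` has none, because its maximum `M` lies on the chain to `M`. For a
right-unique relation with a sink `z`, reaching `z` by a directed path is preserved along edges in
both directions, so connectivity gives a directed path from every block to `π^M`; in particular
`π^M` is the only sink. Any other block thus has its maximum off the chain to `M`, and the greatest
common ancestor of that maximum and `M` supplies its outgoing edge.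
-/

namespace Relation

theorem EqvGen.reflTransGen_iff_of_rightUnique {α : Type*} {r : α → α → Prop}
    (hr : Relator.RightUnique r) {z : α} (hz : ∀ y, ¬ r z y) {x y : α} (h : EqvGen r x y) :
    ReflTransGen r x z ↔ ReflTransGen r y z := by
  induction h with
  | rel x y hxy =>
    refine ⟨fun hxz => ?_, ReflTransGen.head hxy⟩
    rcases hxz.cases_head with rfl | ⟨w, hxw, hwz⟩
    · exact absurd hxy (hz y)
    · exact hr hxy hxw ▸ hwz
  | refl => exact Iff.rfl
  | symm _ _ _ ih => exact ih.symm
  | trans _ _ _ _ _ ih₁ ih₂ => exact ih₁.trans ih₂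

end Relation

namespace ITree

variable (T : ITree)

theorem parent_mem {v : ℕ} (hv : v ∈ T.verts) : T.parent v ∈ T.verts := by
  by_cases h : ∀ u ∈ T.verts, v ≤ u
  · rwa [T.parent_root v hv h]
  · exact (T.parent_lt v hv h).1

theorem iterate_parent_mem {v : ℕ} (hv : v ∈ T.verts) (k : ℕ) : T.parent^[k] v ∈ T.verts := by
  induction k with
  | zero => exact hv
  | succ k ih => rw [Function.iterate_succ_apply']; exact T.parent_mem ih

theorem mem_of_ancestor {a v : ℕ} (h : Ancestor T a v) (hv : v ∈ T.verts) : a ∈ T.verts := by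
  obtain ⟨k, rfl⟩ := h
  exact T.iterate_parent_mem hv k

theorem min'_ancestor (hne : T.verts.Nonempty) {v : ℕ} (hv : v ∈ T.verts) :
    Ancestor T (T.verts.min' hne) v := by
  induction v using Nat.strong_induction_on with
  | _ v ih =>
    by_cases h : ∀ u ∈ T.verts, v ≤ u
    · exact ⟨0, le_antisymm (h _ (T.verts.min'_mem hne)) (T.verts.min'_le v hv)⟩
    · obtain ⟨hp, hlt⟩ := T.parent_lt v hv h
      obtain ⟨k, hk⟩ := ih _ hlt hp
      exact ⟨k + 1, hk⟩

theorem exists_greatest_common_ancestor {v w : ℕ} (hv : v ∈ T.verts) (hw : w ∈ T.verts) :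
    ∃ a ∈ T.verts, Ancestor T a v ∧ Ancestor T a w ∧
      ∀ x, Ancestor T x v → Ancestor T x w → x ≤ a := by
  set A := T.verts.filter (fun x => Ancestor T x v ∧ Ancestor T x w)
  have hne : T.verts.Nonempty := ⟨v, hv⟩
  have hA : A.Nonempty := ⟨_, Finset.mem_filter.mpr
    ⟨T.verts.min'_mem hne, T.min'_ancestor hne hv, T.min'_ancestor hne hw⟩⟩
  obtain ⟨ha, hav, haw⟩ := Finset.mem_filter.mp (A.max'_mem hA)
  exact ⟨A.max' hA, ha, hav, haw, fun x hxv hxw =>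
    A.le_max' x (Finset.mem_filter.mpr ⟨T.mem_of_ancestor hxv hv, hxv, hxw⟩)⟩

end ITree

theorem PiIncreasing.subset_verts_of_mem {π : Finset (Finset ℕ)} {T : ITree}
    (hπ : IsPartition π) (hT : PiIncreasing π T) {B : Finset ℕ} (hB : B ∈ π) {x : ℕ}
    (hxB : x ∈ B) (hxT : x ∈ T.verts) : B ⊆ T.verts := by
  obtain ⟨B', hB', hxB', hB'T⟩ := hT.1 x hxT
  obtain rfl : B' = B := by
    by_contra hne
    exact Finset.disjoint_left.mp (hπ.2.2 B' hB' B hB hne) hxB' hxB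
  exact hB'T

section DepEdge

variable {π : Finset (Finset ℕ)} {T : ITree} {v : ℕ}

theorem depEdge_rightUnique (hπ : IsPartition π) : Relator.RightUnique (DepEdge π T v) := by
  rintro B B₁ B₂ ⟨-, hB₁, -, -, hB, -, a₁, ha₁, ha₁v, ha₁μ, hmax₁⟩
    ⟨-, hB₂, -, -, hB', -, a₂, ha₂, ha₂v, ha₂μ, hmax₂⟩
  obtain rfl : hB = hB' := rfl
  obtain rfl : a₁ = a₂ := le_antisymm (hmax₂ a₁ ha₁v ha₁μ) (hmax₁ a₂ ha₂v ha₂μ)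
  by_contra hne
  exact Finset.disjoint_left.mp (hπ.2.2 B₁ hB₁ B₂ hB₂ hne) ha₁ ha₂

theorem not_depEdge_of_ancestor {B : Finset ℕ} (hB : B.Nonempty) (h : Ancestor T (B.max' hB) v)
    (B' : Finset ℕ) : ¬ DepEdge π T v B B' := by
  rintro ⟨-, -, -, -, _, hμ, -⟩
  exact hμ h

theorem exists_depEdge_of_not_ancestor (hT : PiIncreasing π T) (hv : v ∈ T.verts)
    {B : Finset ℕ} (hBπ : B ∈ π) (hBT : B ⊆ T.verts) (hB : B.Nonempty)
    (hμ : ¬ Ancestor T (B.max' hB) v) : ∃ B', DepEdge π T v B B' := by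
  obtain ⟨a, ha, hav, haμ, hmax⟩ :=
    T.exists_greatest_common_ancestor hv (hBT (B.max'_mem hB))
  obtain ⟨B', hB'π, haB', hB'T⟩ := hT.1 a ha
  exact ⟨B', hBπ, hB'π, hBT, hB'T, hB, hμ, a, haB', hav, haμ, hmax⟩

end DepEdge

/-- **Lemma 3.4 of Féray–Goulden–Lascoux.**  If a `π`-increasing tree `T` with
maximum vertex `M` is irreducible (its `M`-dependence graph is connected),
then `G_M(T)` is a directed tree rooted at the block `π^M` containing `M`,
with all edges directed towards the root: `π^M` has outdegree `0`, every other
block has a unique outgoing edge, and every block has a directed path to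
`π^M`. -/
theorem dependence_graph_is_directed_tree (π : Finset (Finset ℕ)) (T : ITree)
    (hπ : IsPartition π) (hT : PiIncreasing π T) (M : ℕ)
    (hM : M ∈ T.verts) (hMmax : ∀ u ∈ T.verts, u ≤ M)
    (hirr : DepConnected π T M)
    (BM : Finset ℕ) (hBM : BM ∈ π) (hMBM : M ∈ BM) :
    (∀ B' : Finset ℕ, ¬ DepEdge π T M BM B') ∧
    (∀ B ∈ π, B ⊆ T.verts → B ≠ BM → ∃! B' : Finset ℕ, DepEdge π T M B B') ∧
    (∀ B ∈ π, B ⊆ T.verts → Relation.ReflTransGen (DepEdge π T M) B BM) := by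
  have hBMT : BM ⊆ T.verts := hT.subset_verts_of_mem hπ hBM hMBM hM
  have hBMmax : BM.max' ⟨M, hMBM⟩ = M :=
    le_antisymm (hMmax _ (hBMT (BM.max'_mem _))) (BM.le_max' M hMBM)
  have sink : ∀ B', ¬ DepEdge π T M BM B' :=
    not_depEdge_of_ancestor ⟨M, hMBM⟩ (by rw [hBMmax]; exact ⟨0, rfl⟩)
  have reach : ∀ B ∈ π, B ⊆ T.verts → Relation.ReflTransGen (DepEdge π T M) B BM :=
    fun B hBπ hBT => ((hirr B hBπ hBT BM hBM hBMT).reflTransGen_iff_of_rightUnique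
      (depEdge_rightUnique hπ) sink).2 .refl
  refine ⟨sink, fun B hBπ hBT hne => ?_, reach⟩
  have hB : B.Nonempty := hπ.1 B hBπ
  have hμ : ¬ Ancestor T (B.max' hB) M := fun hA =>
    match (reach B hBπ hBT).cases_head with
    | .inl heq => hne heq
    | .inr ⟨_, hedge, _⟩ => not_depEdge_of_ancestor hB hA _ hedge
  obtain ⟨B', hB'⟩ := exists_depEdge_of_not_ancestor hT hM hBπ hBT hB hμ
  exact ⟨B', hB', fun _ h => depEdge_rightUnique hπ h hB'⟩
end

section
/- Let T be a π-increasing tree, V_1 a nonempty proper subset of V(T) that is a union of blocks of π, and v_1 ∈ V_1. Then T can be written as T = splice(T_1, v_1; T_2, v_2) for π-increasing trees T_1, T_2 with vertex sets V_1 and V(T) \ V_1 and some vertex v_2 ∈ V(T) \ V_1, if and only if V_1 is a union of vertex sets of connected components of the v_1-dependence graph G_{v_1}(T). When this holds, T_1, T_2 and v_2 are unique, and v_2 is the first element of V(T) \ V_1 on the chain from v_1 to the root of T. -/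
open scoped Classical

/-!
Both conditions are equivalent to `V₁` being a union of pieces of the `v₁`-decomposition of `T`:
no edge of `T` off the chain from the root to `v₁` joins `V₁` to its complement. A splice changes
only parents of chain vertices, so its pieces come from those of `T₁` and `T₂`. Conversely, the
restrictions of `T` to `V₁` and to `V(T) \ V₁`, with the traces of the chain relinked, splice back
to `T`; any decomposition must consist of these restrictions, with `v₂` the largest vertex of
`V(T) \ V₁` on the chain.

An edge of `G_{v₁}(T)` joins the block of a maximum `μ` to the block of the root of the piece of
`μ`, so a union of pieces is a union of components. Conversely, every vertex is an ancestor of the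
maximum of its block, hence lies in the same piece as that maximum, so it lies on the same side as
the root of its piece when `V₁` is a union of components.
-/

namespace ITree

variable (T : ITree)

theorem parent_mem_lt {u v : ℕ} (hv : v ∈ T.verts) (hu : u ∈ T.verts) (huv : u < v) :
    T.parent v ∈ T.verts ∧ T.parent v < v :=
  T.parent_lt v hv fun h => (h u hu).not_gt huv

theorem iterate_parent_mem_le {v : ℕ} (hv : v ∈ T.verts) (k : ℕ) :
    T.parent^[k] v ∈ T.verts ∧ T.parent^[k] v ≤ v := by
  induction k with
  | zero => exact ⟨hv, le_rfl⟩
  | succ k ih =>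
    rw [Function.iterate_succ_apply']
    by_cases h : ∀ u ∈ T.verts, T.parent^[k] v ≤ u
    · rwa [T.parent_root _ ih.1 h]
    · obtain ⟨hp, hlt⟩ := T.parent_lt _ ih.1 h
      exact ⟨hp, hlt.le.trans ih.2⟩

end ITree

namespace Ancestor

variable {T : ITree} {a b u v : ℕ}

theorem refl (T : ITree) (v : ℕ) : Ancestor T v v := ⟨0, rfl⟩

theorem parent (T : ITree) (v : ℕ) : Ancestor T (T.parent v) v := ⟨1, rfl⟩

theorem trans (h₁ : Ancestor T a b) (h₂ : Ancestor T b v) : Ancestor T a v := by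
  obtain ⟨k, rfl⟩ := h₁
  obtain ⟨l, rfl⟩ := h₂
  exact ⟨k + l, Function.iterate_add_apply _ _ _ _⟩

theorem mem_le (h : Ancestor T a v) (hv : v ∈ T.verts) : a ∈ T.verts ∧ a ≤ v := by
  obtain ⟨k, rfl⟩ := h
  exact T.iterate_parent_mem_le hv k

theorem to_parent (h : Ancestor T a v) (hne : a ≠ v) : Ancestor T a (T.parent v) := by
  obtain ⟨_ | k, rfl⟩ := h
  · exact absurd rfl hne
  · exact ⟨k, (Function.iterate_succ_apply _ _ _).symm⟩

theorem of_le (ha : Ancestor T a u) (hb : Ancestor T b u) (hu : u ∈ T.verts) (hab : a ≤ b) :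
    Ancestor T a b := by
  obtain ⟨k, rfl⟩ := ha
  obtain ⟨l, rfl⟩ := hb
  rcases le_total l k with hlk | hkl
  · exact ⟨k - l, by rw [← Function.iterate_add_apply, Nat.sub_add_cancel hlk]⟩
  · have hba : Ancestor T (T.parent^[l] u) (T.parent^[k] u) :=
      ⟨l - k, by rw [← Function.iterate_add_apply, Nat.sub_add_cancel hkl]⟩
    rw [le_antisymm hab (hba.mem_le (T.iterate_parent_mem_le hu k).1).2]
    exact .refl T _

end Ancestor

theorem ancestor_of_forall_le {T : ITree} {r v : ℕ} (hr : r ∈ T.verts)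
    (hmin : ∀ u ∈ T.verts, r ≤ u) (hv : v ∈ T.verts) : Ancestor T r v := by
  induction v using Nat.strong_induction_on with
  | _ v ih =>
    rcases (hmin v hv).eq_or_lt with rfl | hlt
    · exact .refl T r
    · obtain ⟨hp, hpv⟩ := T.parent_mem_lt hv hr hlt
      exact (ih _ hpv hp).trans (.parent T v)

theorem ITree.parent_mem_lt_of_not_ancestor {T : ITree} {v w : ℕ} (hw : w ∈ T.verts)
    (hv : v ∈ T.verts) (h : ¬ Ancestor T w v) : T.parent w ∈ T.verts ∧ T.parent w < w :=
  T.parent_lt w hw fun hmin => h (ancestor_of_forall_le hw hmin hv)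

section Chain

variable {T : ITree} {a v : ℕ}

theorem mem_chain : a ∈ chain T v ↔ a ∈ T.verts ∧ Ancestor T a v := Finset.mem_filter

theorem chain_subset (T : ITree) (v : ℕ) : chain T v ⊆ T.verts := Finset.filter_subset _ _

theorem mem_chain_of_ancestor (h : Ancestor T a v) (hv : v ∈ T.verts) : a ∈ chain T v :=
  mem_chain.2 ⟨(h.mem_le hv).1, h⟩

theorem isGreatest_chain (hv : v ∈ T.verts) : IsGreatest (chain T v : Set ℕ) v :=
  ⟨mem_chain.2 ⟨hv, .refl T v⟩, fun _ ha => ((mem_chain.1 ha).2.mem_le hv).2⟩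

end Chain

def chainPred (C : Finset ℕ) (w : ℕ) : ℕ :=
  if h : (C.filter (· < w)).Nonempty then (C.filter (· < w)).max' h else w

theorem chainPred_spec {C : Finset ℕ} {c w : ℕ} (hc : c ∈ C) (hcw : c < w) :
    chainPred C w ∈ C ∧ chainPred C w < w ∧ c ≤ chainPred C w := by
  have hcf : c ∈ C.filter (· < w) := Finset.mem_filter.2 ⟨hc, hcw⟩
  have hmax := Finset.mem_filter.1 ((C.filter (· < w)).max'_mem ⟨c, hcf⟩)
  rw [chainPred, dif_pos ⟨c, hcf⟩]
  exact ⟨hmax.1, hmax.2, Finset.le_max' _ c hcf⟩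

theorem chainPred_eq_self {C : Finset ℕ} {w : ℕ} (h : ∀ c ∈ C, w ≤ c) : chainPred C w = w := by
  rw [chainPred, dif_neg]
  rintro ⟨c, hc⟩
  exact (h c (Finset.mem_filter.1 hc).1).not_gt (Finset.mem_filter.1 hc).2

theorem chainPred_eq_self_or_mem_lt (C : Finset ℕ) (w : ℕ) :
    chainPred C w = w ∨ chainPred C w ∈ C ∧ chainPred C w < w := by
  by_cases h : ∃ c ∈ C, c < w
  · obtain ⟨c, hc, hcw⟩ := h
    exact .inr ⟨(chainPred_spec hc hcw).1, (chainPred_spec hc hcw).2.1⟩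
  · push Not at h
    exact .inl (chainPred_eq_self h)

theorem parent_eq_chainPred {T : ITree} {v w : ℕ} (hv : v ∈ T.verts) (hw : w ∈ chain T v) :
    T.parent w = chainPred (chain T v) w := by
  obtain ⟨hwT, hwv⟩ := mem_chain.1 hw
  have hpC : T.parent w ∈ chain T v := mem_chain_of_ancestor ((Ancestor.parent T w).trans hwv) hv
  by_cases h : ∃ c ∈ chain T v, c < w
  · obtain ⟨c, hc, hcw⟩ := h
    obtain ⟨hpT, hpw⟩ := T.parent_mem_lt hwT (mem_chain.1 hc).1 hcw
    obtain ⟨hqC, hqw, -⟩ := chainPred_spec hc hcw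
    refine le_antisymm (chainPred_spec hpC hpw).2.2 ?_
    have hqa : Ancestor T (chainPred (chain T v) w) w := (mem_chain.1 hqC).2.of_le hwv hv hqw.le
    exact ((hqa.to_parent hqw.ne).mem_le hpT).2
  · push Not at h
    rw [chainPred_eq_self h]
    by_contra hne
    exact (h _ hpC).not_gt (T.parent_lt w hwT fun hmin => hne (T.parent_root w hwT hmin)).2

/-- `a` is the largest common ancestor of `v` and `w`, i.e. the root of the piece of the
`v`-decomposition of `T` that contains `w`. -/
def IsMeet (T : ITree) (v w a : ℕ) : Prop :=
  Ancestor T a v ∧ Ancestor T a w ∧ ∀ c, Ancestor T c v → Ancestor T c w → c ≤ a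

theorem exists_isMeet {T : ITree} {v w : ℕ} (hv : v ∈ T.verts) (hw : w ∈ T.verts) :
    ∃ a, IsMeet T v w a := by
  set S := T.verts.filter fun c => Ancestor T c v ∧ Ancestor T c w
  have hr := T.verts.min'_mem ⟨v, hv⟩
  have hmin := fun u hu => T.verts.min'_le u hu
  have hS : S.Nonempty := ⟨_, Finset.mem_filter.2
    ⟨hr, ancestor_of_forall_le hr hmin hv, ancestor_of_forall_le hr hmin hw⟩⟩
  obtain ⟨-, hav, haw⟩ := Finset.mem_filter.1 (S.max'_mem hS)
  exact ⟨S.max' hS, hav, haw,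
    fun c hcv hcw => S.le_max' c (Finset.mem_filter.2 ⟨(hcv.mem_le hv).1, hcv, hcw⟩)⟩

namespace IsMeet

variable {T : ITree} {v w a : ℕ}

theorem eq_of_ancestor (ha : IsMeet T v w a) (hw : w ∈ T.verts) (hwv : Ancestor T w v) :
    a = w :=
  le_antisymm (ha.2.1.mem_le hw).2 (ha.2.2 w hwv (.refl T w))

theorem parent (ha : IsMeet T v w a) (hwv : ¬ Ancestor T w v) : IsMeet T v (T.parent w) a :=
  ⟨ha.1, ha.2.1.to_parent fun h => hwv (h ▸ ha.1),
    fun c hcv hcp => ha.2.2 c hcv (hcp.trans (.parent T w))⟩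

theorem of_ancestor {μ : ℕ} (ha : IsMeet T v w a) (hwv : ¬ Ancestor T w v)
    (hwμ : Ancestor T w μ) (hμ : μ ∈ T.verts) : IsMeet T v μ a := by
  refine ⟨ha.1, ha.2.1.trans hwμ, fun c hcv hcμ => ha.2.2 c hcv ?_⟩
  rcases le_total c w with hcw | hwc
  · exact hcμ.of_le hwμ hμ hcw
  · exact absurd ((hwμ.of_le hcμ hμ hwc).trans hcv) hwv

end IsMeet

/-- `V` is a union of pieces of the `v`-decomposition of `T`: no edge of `T` off the chain from
the root to `v` joins `V` to its complement. -/
def IsUnionOfPieces (T : ITree) (v : ℕ) (V : Finset ℕ) : Prop :=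
  ∀ w ∈ T.verts, ¬ Ancestor T w v → (T.parent w ∈ V ↔ w ∈ V)

section Pieces

variable {T : ITree} {v : ℕ} {V : Finset ℕ}

theorem IsUnionOfPieces.mem_iff_of_isMeet (hV : IsUnionOfPieces T v V) {w a : ℕ}
    (hw : w ∈ T.verts) (ha : IsMeet T v w a) : a ∈ V ↔ w ∈ V := by
  induction w using Nat.strong_induction_on with
  | _ w ih =>
    by_cases hwv : Ancestor T w v
    · rw [ha.eq_of_ancestor hw hwv]
    · have haw : a < w := lt_of_le_of_ne (ha.2.1.mem_le hw).2 fun h => hwv (h ▸ ha.1)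
      obtain ⟨hp, hpw⟩ := T.parent_mem_lt hw (ha.2.1.mem_le hw).1 haw
      exact (ih _ hpw hp (ha.parent hwv)).trans (hV w hw hwv)

theorem IsUnionOfPieces.parent_mem (hV : IsUnionOfPieces T v V) (hsub : V ⊆ T.verts) {w : ℕ}
    (hw : w ∈ V) (hwv : ¬ Ancestor T w v) : T.parent w ∈ V :=
  (hV w (hsub hw) hwv).2 hw

theorem IsUnionOfPieces.parent_mem_sdiff (hV : IsUnionOfPieces T v V) (hv : v ∈ T.verts)
    {w : ℕ} (hw : w ∈ T.verts \ V) (hwv : ¬ Ancestor T w v) : T.parent w ∈ T.verts \ V := by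
  rw [Finset.mem_sdiff] at hw ⊢
  exact ⟨(T.parent_mem_lt_of_not_ancestor hw.1 hv hwv).1, fun h => hw.2 ((hV w hw.1 hwv).1 h)⟩

end Pieces

theorem IsPartition.subset_of_mem {π : Finset (Finset ℕ)} (hπ : IsPartition π) {V B : Finset ℕ}
    (hblocks : ∀ v ∈ V, ∃ B ∈ π, v ∈ B ∧ B ⊆ V) (hB : B ∈ π) {b : ℕ} (hbB : b ∈ B)
    (hbV : b ∈ V) : B ⊆ V := by
  obtain ⟨B', hB'π, hbB', hB'V⟩ := hblocks b hbV
  by_cases h : B = B'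
  · exact h ▸ hB'V
  · exact absurd hbB' (Finset.disjoint_left.1 (hπ.2.2 B hB B' hB'π h) hbB)

section DependenceGraph

variable {π : Finset (Finset ℕ)} {T : ITree} {v : ℕ} {V : Finset ℕ}

theorem IsUnionOfPieces.subset_iff_of_eqvGen (hπ : IsPartition π)
    (hblocks : ∀ u ∈ V, ∃ B ∈ π, u ∈ B ∧ B ⊆ V) (hV : IsUnionOfPieces T v V) {B B' : Finset ℕ}
    (h : Relation.EqvGen (DepEdge π T v) B B') : B ⊆ V ↔ B' ⊆ V := by
  induction h with
  | rel B B' hBB' =>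
    obtain ⟨hBπ, hB'π, hBT, -, hB, -, a, haB', ha⟩ := hBB'
    have hμB := B.max'_mem hB
    have hiff := hV.mem_iff_of_isMeet (hBT hμB) ha
    exact ⟨fun hBV => hπ.subset_of_mem hblocks hB'π haB' (hiff.2 (hBV hμB)),
      fun hB'V => hπ.subset_of_mem hblocks hBπ hμB (hiff.1 (hB'V haB'))⟩
  | refl => exact .rfl
  | symm _ _ _ ih => exact ih.symm
  | trans _ _ _ _ _ ih₁ ih₂ => exact ih₁.trans ih₂

-- `w` is an ancestor of the maximum of its block, so that maximum lies in the piece of `w`, and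
-- `G_v(T)` has an edge from the block of `w` to the block of the root of this piece.
theorem mem_iff_of_isMeet_of_closed (hπ : IsPartition π) (hT : PiIncreasing π T)
    (hblocks : ∀ u ∈ V, ∃ B ∈ π, u ∈ B ∧ B ⊆ V)
    (hcl : ∀ B ∈ π, B ⊆ V → ∀ B' ∈ π, B' ⊆ T.verts →
      Relation.EqvGen (DepEdge π T v) B B' → B' ⊆ V)
    {w a : ℕ} (hw : w ∈ T.verts) (ha : IsMeet T v w a) : a ∈ V ↔ w ∈ V := by
  by_cases hwv : Ancestor T w v
  · rw [ha.eq_of_ancestor hw hwv]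
  obtain ⟨B, hBπ, hwB, hBT⟩ := hT.1 w hw
  obtain ⟨B', hB'π, haB', hB'T⟩ := hT.1 a (ha.2.1.mem_le hw).1
  have hB : B.Nonempty := ⟨w, hwB⟩
  have hwμ : Ancestor T w (B.max' hB) := hT.2 B hBπ hBT w hwB _ (B.max'_mem hB) (B.le_max' w hwB)
  have hedge : DepEdge π T v B B' := ⟨hBπ, hB'π, hBT, hB'T, hB, fun h => hwv (hwμ.trans h), a,
    haB', ha.of_ancestor hwv hwμ (hBT (B.max'_mem hB))⟩
  exact ⟨fun haV => hcl B' hB'π (hπ.subset_of_mem hblocks hB'π haB' haV) B hBπ hBT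
      (.symm _ _ (.rel _ _ hedge)) hwB,
    fun hwV => hcl B hBπ (hπ.subset_of_mem hblocks hBπ hwB hwV) B' hB'π hB'T (.rel _ _ hedge) haB'⟩

theorem isUnionOfPieces_iff_closed (hπ : IsPartition π) (hT : PiIncreasing π T)
    (hblocks : ∀ u ∈ V, ∃ B ∈ π, u ∈ B ∧ B ⊆ V) (hv : v ∈ T.verts) :
    IsUnionOfPieces T v V ↔ ∀ B ∈ π, B ⊆ V → ∀ B' ∈ π, B' ⊆ T.verts →
      Relation.EqvGen (DepEdge π T v) B B' → B' ⊆ V := by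
  refine ⟨fun hV B _ hBV B' _ _ h => (hV.subset_iff_of_eqvGen hπ hblocks h).1 hBV,
    fun hcl w hw hwv => ?_⟩
  obtain ⟨a, ha⟩ := exists_isMeet hv hw
  obtain ⟨hp, -⟩ := T.parent_mem_lt_of_not_ancestor hw hv hwv
  exact (mem_iff_of_isMeet_of_closed hπ hT hblocks hcl hp (ha.parent hwv)).symm.trans
    (mem_iff_of_isMeet_of_closed hπ hT hblocks hcl hw ha)

end DependenceGraph

noncomputable def restrictParent (T : ITree) (v : ℕ) (W : Finset ℕ) (w : ℕ) : ℕ :=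
  if w ∈ chain T v then chainPred (chain T v ∩ W) w else T.parent w

section Restrict

variable {T : ITree} {v : ℕ} {W : Finset ℕ}

theorem ancestor_of_forall_le_of_closed (hv : v ∈ T.verts) (hW : W ⊆ T.verts)
    (hclosed : ∀ w ∈ W, ¬ Ancestor T w v → T.parent w ∈ W) {u : ℕ} (hu : u ∈ W)
    (hmin : ∀ x ∈ W, u ≤ x) :
    Ancestor T u v := by
  by_contra huv
  exact (hmin _ (hclosed u hu huv)).not_gt (T.parent_mem_lt_of_not_ancestor (hW hu) hv huv).2

theorem restrictParent_of_forall_le (hv : v ∈ T.verts) (hW : W ⊆ T.verts)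
    (hclosed : ∀ w ∈ W, ¬ Ancestor T w v → T.parent w ∈ W) {u : ℕ} (hu : u ∈ W)
    (hmin : ∀ x ∈ W, u ≤ x) :
    restrictParent T v W u = u := by
  have huC := mem_chain_of_ancestor (ancestor_of_forall_le_of_closed hv hW hclosed hu hmin) hv
  rw [restrictParent, if_pos huC, chainPred_eq_self fun c hc => hmin c (Finset.mem_inter.1 hc).2]

theorem restrictParent_mem_lt (hv : v ∈ T.verts) (hW : W ⊆ T.verts)
    (hclosed : ∀ w ∈ W, ¬ Ancestor T w v → T.parent w ∈ W) {u x : ℕ} (hu : u ∈ W)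
    (hx : x ∈ W) (hxu : x < u) :
    restrictParent T v W u ∈ W ∧ restrictParent T v W u < u := by
  unfold restrictParent
  split_ifs with huC
  · have hm := W.min'_mem ⟨x, hx⟩
    have hmC := mem_chain_of_ancestor (ancestor_of_forall_le_of_closed hv hW hclosed hm
      fun y hy => W.min'_le y hy) hv
    obtain ⟨hpC, hpu, -⟩ := chainPred_spec (Finset.mem_inter.2 ⟨hmC, hm⟩)
      ((W.min'_le x hx).trans_lt hxu)
    exact ⟨(Finset.mem_inter.1 hpC).2, hpu⟩
  · have huv : ¬ Ancestor T u v := fun h => huC (mem_chain_of_ancestor h hv)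
    exact ⟨hclosed u hu huv, (T.parent_mem_lt (hW hu) (hW hx) hxu).2⟩

theorem restrictParent_mem_ancestor (hv : v ∈ T.verts)
    (hclosed : ∀ w ∈ W, ¬ Ancestor T w v → T.parent w ∈ W) {u : ℕ} (hu : u ∈ W) :
    restrictParent T v W u ∈ W ∧ Ancestor T (restrictParent T v W u) u := by
  unfold restrictParent
  split_ifs with huC
  · rcases chainPred_eq_self_or_mem_lt (chain T v ∩ W) u with h | ⟨hpCW, hpu⟩
    · rw [h]
      exact ⟨hu, .refl T u⟩
    · obtain ⟨hpC, hpW⟩ := Finset.mem_inter.1 hpCW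
      exact ⟨hpW, (mem_chain.1 hpC).2.of_le (mem_chain.1 huC).2 hv hpu.le⟩
  · exact ⟨hclosed u hu fun h => huC (mem_chain_of_ancestor h hv), .parent T u⟩

variable (hv : v ∈ T.verts) (hW : W ⊆ T.verts)
  (hclosed : ∀ w ∈ W, ¬ Ancestor T w v → T.parent w ∈ W)

noncomputable def ITree.restrict : ITree where
  verts := W
  parent := restrictParent T v W
  pos u hu := T.pos u (hW hu)
  parent_root u hu hmin := restrictParent_of_forall_le hv hW hclosed hu hmin
  parent_lt u hu hmin := by
    push Not at hmin
    obtain ⟨x, hx, hxu⟩ := hmin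
    exact restrictParent_mem_lt hv hW hclosed hu hx hxu

theorem ancestor_restrict_iff {a u : ℕ} (hu : u ∈ W) :
    Ancestor (ITree.restrict hv hW hclosed) a u ↔ a ∈ W ∧ Ancestor T a u := by
  constructor
  · rintro ⟨k, rfl⟩
    induction k with
    | zero => exact ⟨hu, .refl T u⟩
    | succ k ih =>
      rw [Function.iterate_succ_apply']
      obtain ⟨hpW, hpa⟩ := restrictParent_mem_ancestor hv hclosed ih.1
      exact ⟨hpW, hpa.trans ih.2⟩
  · rintro ⟨haW, hau⟩
    induction u using Nat.strong_induction_on with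
    | _ u ih =>
      rcases eq_or_ne a u with rfl | hne
      · exact .refl _ a
      have hau' : a < u := lt_of_le_of_ne (hau.mem_le (hW hu)).2 hne
      suffices h : restrictParent T v W u < u ∧ Ancestor T a (restrictParent T v W u) from
        (ih _ h.1 (restrictParent_mem_lt hv hW hclosed hu haW hau').1 h.2).trans (.parent _ u)
      by_cases huC : u ∈ chain T v
      · have haC := mem_chain_of_ancestor (hau.trans (mem_chain.1 huC).2) hv
        obtain ⟨hpC, hpu, hap⟩ := chainPred_spec (Finset.mem_inter.2 ⟨haC, haW⟩) hau'
        rw [restrictParent, if_pos huC]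
        exact ⟨hpu, (mem_chain.1 haC).2.of_le (mem_chain.1 (Finset.mem_inter.1 hpC).1).2 hv hap⟩
      · rw [restrictParent, if_neg huC]
        exact ⟨(T.parent_mem_lt (hW hu) (hW haW) hau').2, hau.to_parent hne⟩

theorem chain_restrict {t : ℕ} (htC : t ∈ chain T v) (htW : t ∈ W)
    (htmax : ∀ c ∈ chain T v, c ∈ W → c ≤ t) :
    chain (ITree.restrict hv hW hclosed) t = chain T v ∩ W := by
  ext a
  rw [mem_chain, Finset.mem_inter, ancestor_restrict_iff hv hW hclosed htW]
  refine ⟨fun ⟨_, haW, hat⟩ => ⟨mem_chain_of_ancestor (hat.trans (mem_chain.1 htC).2) hv, haW⟩,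
    fun ⟨haC, haW⟩ => ⟨haW, haW, ?_⟩⟩
  exact (mem_chain.1 haC).2.of_le (mem_chain.1 htC).2 hv (htmax a haC haW)

theorem PiIncreasing.restrict {π : Finset (Finset ℕ)} (hT : PiIncreasing π T)
    (hblocks : ∀ u ∈ W, ∃ B ∈ π, u ∈ B ∧ B ⊆ W) :
    PiIncreasing π (ITree.restrict hv hW hclosed) :=
  ⟨hblocks, fun B hBπ hBW i hi j hj hij => (ancestor_restrict_iff hv hW hclosed (hBW hj)).2
    ⟨hBW hi, hT.2 B hBπ (hBW.trans hW) i hi j hj hij⟩⟩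

end Restrict

section Splice

variable {T₁ T₂ R : ITree} {v₁ v₂ : ℕ}

theorem chain_eq_of_parent_eq_max' {D : Finset ℕ} {r t : ℕ} (hD : D ⊆ R.verts) (hr : r ∈ D)
    (hrmin : ∀ u ∈ R.verts, r ≤ u) (ht : t ∈ D) (htmax : ∀ d ∈ D, d ≤ t)
    (hpar : ∀ w ∈ D, ∀ h : (D.filter (· < w)).Nonempty,
      R.parent w = (D.filter (· < w)).max' h) :
    chain R t = D := by
  have hparD : ∀ w ∈ D, R.parent w ∈ D := fun w hw => by
    by_cases h : (D.filter (· < w)).Nonempty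
    · rw [hpar w hw h]
      exact (Finset.mem_filter.1 ((D.filter (· < w)).max'_mem h)).1
    · have hwr : w ≤ r := not_lt.1 fun hrw => h ⟨r, Finset.mem_filter.2 ⟨hr, hrw⟩⟩
      rwa [R.parent_root w (hD hw) fun u hu => hwr.trans (hrmin u hu)]
  have hanc : ∀ w ∈ D, ∀ d ∈ D, d ≤ w → Ancestor R d w := fun w => by
    induction w using Nat.strong_induction_on with
    | _ w ih =>
      intro hw d hd hdw
      rcases hdw.eq_or_lt with rfl | hdw
      · exact .refl R d
      have hdf : d ∈ D.filter (· < w) := Finset.mem_filter.2 ⟨hd, hdw⟩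
      have hm := Finset.mem_filter.1 ((D.filter (· < w)).max'_mem ⟨d, hdf⟩)
      have hdm := ih _ hm.2 hm.1 d hd ((D.filter (· < w)).le_max' d hdf)
      rw [← hpar w hw ⟨d, hdf⟩] at hdm
      exact hdm.trans (.parent R w)
  ext a
  refine ⟨fun ha => ?_, fun ha => mem_chain.2 ⟨hD ha, hanc t ht a ha (htmax a ha)⟩⟩
  obtain ⟨k, rfl⟩ := (mem_chain.1 ha).2
  induction k with
  | zero => exact ht
  | succ k ih =>
    rw [Function.iterate_succ_apply']
    exact hparD _ (ih (mem_chain_of_ancestor ⟨k, rfl⟩ (hD ht)))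

theorem IsSplice.chain_eq (hS : IsSplice T₁ v₁ T₂ v₂ R) (hv₁ : v₁ ∈ T₁.verts)
    (hv₂ : v₂ ∈ T₂.verts) (hlt : v₂ < v₁) : chain R v₁ = chain T₁ v₁ ∪ chain T₂ v₂ := by
  have hR : R.verts.Nonempty := ⟨v₁, hS.1 ▸ Finset.mem_union_left _ hv₁⟩
  have hr := R.verts.min'_mem hR
  have hrmin : ∀ u ∈ R.verts, R.verts.min' hR ≤ u := fun u hu => R.verts.min'_le u hu
  refine chain_eq_of_parent_eq_max' ?_ ?_ hrmin (Finset.mem_union_left _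
    (mem_chain.2 ⟨hv₁, .refl T₁ v₁⟩)) ?_ hS.2.2.2
  · rw [hS.1]
    exact Finset.union_subset_union (chain_subset T₁ v₁) (chain_subset T₂ v₂)
  · rcases Finset.mem_union.1 ((Finset.ext_iff.1 hS.1 _).1 hr) with hr₁ | hr₂
    · exact Finset.mem_union_left _ (mem_chain_of_ancestor (ancestor_of_forall_le hr₁
        (fun u hu => hrmin u (hS.1 ▸ Finset.mem_union_left _ hu)) hv₁) hv₁)
    · exact Finset.mem_union_right _ (mem_chain_of_ancestor (ancestor_of_forall_le hr₂
        (fun u hu => hrmin u (hS.1 ▸ Finset.mem_union_right _ hu)) hv₂) hv₂)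
  · intro d hd
    rcases Finset.mem_union.1 hd with hd | hd
    · exact (isGreatest_chain hv₁).2 hd
    · exact ((isGreatest_chain hv₂).2 hd).trans hlt.le

variable (hS : IsSplice T₁ v₁ T₂ v₂ R) (hv₁ : v₁ ∈ T₁.verts) (hv₂ : v₂ ∈ T₂.verts)
  (hlt : v₂ < v₁) (hdisj : Disjoint T₁.verts T₂.verts)
include hS hv₁ hv₂ hlt hdisj

theorem IsSplice.chain_inter_left : chain R v₁ ∩ T₁.verts = chain T₁ v₁ := by
  rw [hS.chain_eq hv₁ hv₂ hlt, Finset.union_inter_distrib_right,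
    Finset.inter_eq_left.2 (chain_subset T₁ v₁),
    Finset.disjoint_iff_inter_eq_empty.1 ((hdisj.mono_right (chain_subset T₂ v₂)).symm),
    Finset.union_empty]

theorem IsSplice.chain_inter_right : chain R v₁ ∩ T₂.verts = chain T₂ v₂ := by
  rw [hS.chain_eq hv₁ hv₂ hlt, Finset.union_inter_distrib_right,
    Finset.inter_eq_left.2 (chain_subset T₂ v₂),
    Finset.disjoint_iff_inter_eq_empty.1 (hdisj.mono_left (chain_subset T₁ v₁)),
    Finset.empty_union]

theorem IsSplice.isUnionOfPieces : IsUnionOfPieces R v₁ T₁.verts := by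
  intro w hw hwv
  have hwD : w ∉ chain T₁ v₁ ∪ chain T₂ v₂ := by
    rw [← hS.chain_eq hv₁ hv₂ hlt]
    exact fun h => hwv (mem_chain.1 h).2
  rcases Finset.mem_union.1 (hS.1 ▸ hw) with hw₁ | hw₂
  · rw [hS.2.1 w hw₁ hwD]
    exact iff_of_true (T₁.parent_mem_lt_of_not_ancestor hw₁ hv₁
      fun h => hwD (Finset.mem_union_left _ (mem_chain_of_ancestor h hv₁))).1 hw₁
  · rw [hS.2.2.1 w hw₂ hwD]
    exact iff_of_false (Finset.disjoint_right.1 hdisj (T₂.parent_mem_lt_of_not_ancestor hw₂ hv₂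
      fun h => hwD (Finset.mem_union_right _ (mem_chain_of_ancestor h hv₂))).1)
      (Finset.disjoint_right.1 hdisj hw₂)

theorem IsSplice.isGreatest : IsGreatest (chain R v₁ ∩ T₂.verts : Set ℕ) v₂ := by
  rw [← Finset.coe_inter, hS.chain_inter_right hv₁ hv₂ hlt hdisj]
  exact isGreatest_chain hv₂

end Splice

theorem parent_eq_restrictParent_of_chain_inter {R T : ITree} {v t w : ℕ} (ht : t ∈ T.verts)
    (hC : chain R v ∩ T.verts = chain T t)
    (hoff : ∀ w ∈ T.verts, w ∉ chain R v → R.parent w = T.parent w) (hw : w ∈ T.verts) :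
    T.parent w = restrictParent R v T.verts w := by
  unfold restrictParent
  split_ifs with hwC
  · rw [hC]
    exact parent_eq_chainPred ht (hC ▸ Finset.mem_inter.2 ⟨hwC, hw⟩)
  · exact (hoff w hw hwC).symm

theorem IsSplice.parent_eq_restrictParent {T₁ T₂ R : ITree} {v₁ v₂ : ℕ}
    (hS : IsSplice T₁ v₁ T₂ v₂ R) (hv₁ : v₁ ∈ T₁.verts) (hv₂ : v₂ ∈ T₂.verts) (hlt : v₂ < v₁)
    (hdisj : Disjoint T₁.verts T₂.verts) :
    (∀ w ∈ T₁.verts, T₁.parent w = restrictParent R v₁ T₁.verts w) ∧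
      ∀ w ∈ T₂.verts, T₂.parent w = restrictParent R v₁ T₂.verts w := by
  have hD := hS.chain_eq hv₁ hv₂ hlt
  exact ⟨fun w => parent_eq_restrictParent_of_chain_inter hv₁
      (hS.chain_inter_left hv₁ hv₂ hlt hdisj) fun w hw hwC => hS.2.1 w hw (hD ▸ hwC),
    fun w => parent_eq_restrictParent_of_chain_inter hv₂
      (hS.chain_inter_right hv₁ hv₂ hlt hdisj) fun w hw hwC => hS.2.2.1 w hw (hD ▸ hwC)⟩

theorem IsPartition.exists_subset_sdiff {π : Finset (Finset ℕ)} (hπ : IsPartition π)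
    {U V : Finset ℕ} (hU : ∀ u ∈ U, ∃ B ∈ π, u ∈ B ∧ B ⊆ U)
    (hV : ∀ v ∈ V, ∃ B ∈ π, v ∈ B ∧ B ⊆ V) : ∀ u ∈ U \ V, ∃ B ∈ π, u ∈ B ∧ B ⊆ U \ V := by
  intro u hu
  obtain ⟨B, hBπ, huB, hBU⟩ := hU u (Finset.mem_sdiff.1 hu).1
  exact ⟨B, hBπ, huB, fun b hb => Finset.mem_sdiff.2
    ⟨hBU hb, fun hbV => (Finset.mem_sdiff.1 hu).2 (hπ.subset_of_mem hV hBπ hb hbV huB)⟩⟩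

-- The splice point `v₂` is the last vertex outside `V` on the chain to `v`; that chain meets
-- `T.verts \ V` because the root of that set lies on it.
theorem exists_isSplice_restrict {T : ITree} {v : ℕ} {V : Finset ℕ} (hv : v ∈ T.verts)
    (hvV : v ∈ V) (hsub : V ⊆ T.verts) (hprop : V ≠ T.verts) (hV : IsUnionOfPieces T v V) :
    ∃ v₂ ∈ T.verts \ V, v₂ < v ∧
      IsSplice (ITree.restrict hv hsub fun _ hw => hV.parent_mem hsub hw) v
        (ITree.restrict hv Finset.sdiff_subset fun _ hw => hV.parent_mem_sdiff hv hw) v₂ T := by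
  set C := chain T v
  have hclosed₂ : ∀ w ∈ T.verts \ V, ¬ Ancestor T w v → T.parent w ∈ T.verts \ V :=
    fun _ hw => hV.parent_mem_sdiff hv hw
  have hV₂ : (T.verts \ V).Nonempty :=
    Finset.sdiff_nonempty.2 fun h => hprop (Finset.Subset.antisymm hsub h)
  have hm := (T.verts \ V).min'_mem hV₂
  have hmC : (T.verts \ V).min' hV₂ ∈ C \ V := Finset.mem_sdiff.2
    ⟨mem_chain_of_ancestor (ancestor_of_forall_le_of_closed hv Finset.sdiff_subset hclosed₂ hm
      fun x hx => (T.verts \ V).min'_le x hx) hv, (Finset.mem_sdiff.1 hm).2⟩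
  set v₂ := (C \ V).max' ⟨_, hmC⟩
  obtain ⟨hv₂C, hv₂V⟩ := Finset.mem_sdiff.1 ((C \ V).max'_mem ⟨_, hmC⟩)
  have hv₂T : v₂ ∈ T.verts \ V := Finset.mem_sdiff.2 ⟨chain_subset T v hv₂C, hv₂V⟩
  refine ⟨v₂, hv₂T,
    lt_of_le_of_ne ((isGreatest_chain hv).2 hv₂C) (ne_of_mem_of_not_mem hvV hv₂V).symm, ?_⟩
  have hD : chain (ITree.restrict hv hsub fun _ hw => hV.parent_mem hsub hw) v ∪
      chain (ITree.restrict hv Finset.sdiff_subset hclosed₂) v₂ = C := by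
    rw [chain_restrict _ _ _ (isGreatest_chain hv).1 hvV fun c hc _ => (isGreatest_chain hv).2 hc,
      chain_restrict _ _ _ hv₂C hv₂T fun c hc hcV =>
        (C \ V).le_max' c (Finset.mem_sdiff.2 ⟨hc, (Finset.mem_sdiff.1 hcV).2⟩),
      ← Finset.inter_union_distrib_left, Finset.union_sdiff_of_subset hsub,
      Finset.inter_eq_left.2 (chain_subset T v)]
  refine ⟨(Finset.union_sdiff_of_subset hsub).symm, fun w _ hw => ?_, fun w _ hw => ?_,
    fun w hw => ?_⟩
  · rw [hD] at hw
    exact (if_neg hw).symm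
  · rw [hD] at hw
    exact (if_neg hw).symm
  · rw [hD] at hw ⊢
    intro h
    rw [parent_eq_chainPred hv hw, chainPred, dif_pos h]

theorem splice_decomposition_criterion_general (π : Finset (Finset ℕ)) (T : ITree)
    (hπ : IsPartition π) (hT : PiIncreasing π T)
    (V₁ : Finset ℕ) (hsub : V₁ ⊆ T.verts) (hprop : V₁ ≠ T.verts)
    (hblocks : ∀ v ∈ V₁, ∃ B ∈ π, v ∈ B ∧ B ⊆ V₁)
    (v₁ : ℕ) (hv₁ : v₁ ∈ V₁) :
    ((∃ (T₁ T₂ : ITree) (v₂ : ℕ),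
        PiIncreasing π T₁ ∧ PiIncreasing π T₂ ∧
        T₁.verts = V₁ ∧ T₂.verts = T.verts \ V₁ ∧
        v₂ ∈ T.verts \ V₁ ∧ v₂ < v₁ ∧ IsSplice T₁ v₁ T₂ v₂ T) ↔
      (∀ B ∈ π, B ⊆ V₁ → ∀ B' ∈ π, B' ⊆ T.verts →
        Relation.EqvGen (DepEdge π T v₁) B B' → B' ⊆ V₁)) ∧
    (∀ (T₁ T₂ : ITree) (v₂ : ℕ) (T₁' T₂' : ITree) (v₂' : ℕ),
      T₁.verts = V₁ → T₂.verts = T.verts \ V₁ → v₂ ∈ T.verts \ V₁ → v₂ < v₁ →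
      IsSplice T₁ v₁ T₂ v₂ T →
      T₁'.verts = V₁ → T₂'.verts = T.verts \ V₁ → v₂' ∈ T.verts \ V₁ → v₂' < v₁ →
      IsSplice T₁' v₁ T₂' v₂' T →
        (∀ w ∈ V₁, T₁'.parent w = T₁.parent w) ∧
        (∀ w ∈ T.verts \ V₁, T₂'.parent w = T₂.parent w) ∧
        v₂' = v₂ ∧
        (Ancestor T v₂ v₁ ∧ ∀ w ∈ T.verts \ V₁, Ancestor T w v₁ → w ≤ v₂)) := by
  have hv₁T := hsub hv₁
  have hiff := isUnionOfPieces_iff_closed hπ hT hblocks hv₁T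
  have hdisj : Disjoint V₁ (T.verts \ V₁) := Finset.disjoint_sdiff
  refine ⟨⟨?_, fun hcl => ?_⟩, ?_⟩
  · rintro ⟨T₁, T₂, v₂, -, -, rfl, h2, hv₂, hlt, hS⟩
    exact hiff.1 (hS.isUnionOfPieces hv₁ (h2 ▸ hv₂) hlt (h2 ▸ hdisj))
  · obtain ⟨v₂, hv₂, hlt, hS⟩ := exists_isSplice_restrict hv₁T hv₁ hsub hprop (hiff.2 hcl)
    exact ⟨_, _, v₂, hT.restrict _ _ _ hblocks,
      hT.restrict _ _ _ (hπ.exists_subset_sdiff hT.1 hblocks), rfl, rfl, hv₂, hlt, hS⟩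
  · intro T₁ T₂ v₂ T₁' T₂' v₂' h1 h2 hv₂ hlt hS h1' h2' hv₂' hlt' hS'
    obtain ⟨hp₁, hp₂⟩ := hS.parent_eq_restrictParent (h1 ▸ hv₁) (h2 ▸ hv₂) hlt (h1 ▸ h2 ▸ hdisj)
    obtain ⟨hp₁', hp₂'⟩ :=
      hS'.parent_eq_restrictParent (h1' ▸ hv₁) (h2' ▸ hv₂') hlt' (h1' ▸ h2' ▸ hdisj)
    have hG := hS.isGreatest (h1 ▸ hv₁) (h2 ▸ hv₂) hlt (h1 ▸ h2 ▸ hdisj)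
    have hG' := hS'.isGreatest (h1' ▸ hv₁) (h2' ▸ hv₂') hlt' (h1' ▸ h2' ▸ hdisj)
    rw [h2] at hG
    rw [h2'] at hG'
    refine ⟨fun w hw => ?_, fun w hw => ?_, hG'.unique hG, (mem_chain.1 hG.1.1).2,
      fun w hw hwv => hG.2 ⟨mem_chain_of_ancestor hwv hv₁T, hw⟩⟩
    · rw [hp₁' w (h1' ▸ hw), hp₁ w (h1 ▸ hw), h1, h1']
    · rw [hp₂' w (h2' ▸ hw), hp₂ w (h2 ▸ hw), h2, h2']

/-- **Lemma 3.8 of Féray–Goulden–Lascoux.**  Let `T` be a `π`-increasing tree,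
`V₁` a nonempty proper subset of `V(T)` that is a union of blocks of `π`, and
`v₁ ∈ V₁`.  Then `T` can be written as `T = splice(T₁, v₁; T₂, v₂)` for
`π`-increasing trees `T₁`, `T₂` with vertex sets `V₁` and `V(T) \ V₁` and
some vertex `v₂ ∈ V(T) \ V₁`, if and only if `V₁` is a union of vertex sets
of connected components of the `v₁`-dependence graph `G_{v₁}(T)`.  In that
case `T₁`, `T₂` and `v₂` are unique, and `v₂` is the first element of
`V(T) \ V₁` on the chain from `v₁` to the root of `T` (the largest element of
`V(T) \ V₁` that is an ancestor of `v₁`). -/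
theorem splice_decomposition_criterion (π : Finset (Finset ℕ)) (T : ITree)
    (hπ : IsPartition π) (hT : PiIncreasing π T)
    (V₁ : Finset ℕ) (hne : V₁.Nonempty) (hsub : V₁ ⊆ T.verts) (hprop : V₁ ≠ T.verts)
    (hblocks : ∀ v ∈ V₁, ∃ B ∈ π, v ∈ B ∧ B ⊆ V₁)
    (v₁ : ℕ) (hv₁ : v₁ ∈ V₁) :
    ((∃ (T₁ T₂ : ITree) (v₂ : ℕ),
        PiIncreasing π T₁ ∧ PiIncreasing π T₂ ∧
        T₁.verts = V₁ ∧ T₂.verts = T.verts \ V₁ ∧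
        v₂ ∈ T.verts \ V₁ ∧ v₂ < v₁ ∧ IsSplice T₁ v₁ T₂ v₂ T) ↔
      (∀ B ∈ π, B ⊆ V₁ → ∀ B' ∈ π, B' ⊆ T.verts →
        Relation.EqvGen (DepEdge π T v₁) B B' → B' ⊆ V₁)) ∧
    (∀ (T₁ T₂ : ITree) (v₂ : ℕ) (T₁' T₂' : ITree) (v₂' : ℕ),
      T₁.verts = V₁ → T₂.verts = T.verts \ V₁ → v₂ ∈ T.verts \ V₁ → v₂ < v₁ →
      IsSplice T₁ v₁ T₂ v₂ T →
      T₁'.verts = V₁ → T₂'.verts = T.verts \ V₁ → v₂' ∈ T.verts \ V₁ → v₂' < v₁ →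
      IsSplice T₁' v₁ T₂' v₂' T →
        (∀ w ∈ V₁, T₁'.parent w = T₁.parent w) ∧
        (∀ w ∈ T.verts \ V₁, T₂'.parent w = T₂.parent w) ∧
        v₂' = v₂ ∧
        (Ancestor T v₂ v₁ ∧ ∀ w ∈ T.verts \ V₁, Ancestor T w v₁ → w ≤ v₂)) :=
  splice_decomposition_criterion_general π T hπ hT V₁ hsub hprop hblocks v₁ hv₁
end
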